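/- Define D(n) as the maximal cardinality of a collection F of subsets of an n-element set with |r △ s| ∈ {0,4,6,8,12} for all r,s ∈ F and D_n ∩ span⁰(F) root free. Then D(n) ≤ 2·D(n−1) for n ≥ 1, and D(n) ≤ Σ_{m ∈ {0,4,6,8,12}} A(m,n). -/
import Mathlib


/-- Characteristic vector of a subset of `{1,…,n}` in `ℚⁿ`. -/
def charVecQ {n : ℕ} (s : Finset (Fin n)) : Fin n → ℚ := fun i => if i ∈ s then 1 else 0

/-- `span⁰(F) = {Σ_s α_s v(s) : Σ α_s = 0}`. -/
def spanZero {n : ℕ} (F : Finset (Finset (Fin n))) : Set (Fin n → ℚ) :=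
  {x | ∃ α : Finset (Fin n) → ℚ, (∑ s ∈ F, α s) = 0 ∧ x = ∑ s ∈ F, α s • charVecQ s}

/-- Membership in `D_n ⊆ ℤⁿ ⊆ ℚⁿ`: integral coordinates with even sum. -/
def inDn {n : ℕ} (x : Fin n → ℚ) : Prop :=
  (∀ i, ∃ k : ℤ, x i = k) ∧ ∃ k : ℤ, (∑ i, x i) = 2 * k

/-- `D_n ∩ span⁰(F)` is root free: it contains no vector of square `2`. -/
def rootFreeColl {n : ℕ} (F : Finset (Finset (Fin n))) : Prop :=
  ∀ x ∈ spanZero F, inDn x → (∑ i, x i * x i) ≠ 2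

/-- Admissibility of a collection of subsets. -/
def admissibleColl {n : ℕ} (F : Finset (Finset (Fin n))) : Prop :=
  (∀ r ∈ F, ∀ s ∈ F, (symmDiff r s).card ∈ ({0, 4, 6, 8, 12} : Set ℕ)) ∧ rootFreeColl F

/-- `A(m,n)`: the maximal cardinality of an admissible collection of `m`-element
subsets of an `n`-element set. -/
noncomputable def boundA (m n : ℕ) : ℕ :=
  sSup {k | ∃ F : Finset (Finset (Fin n)),
    admissibleColl F ∧ (∀ s ∈ F, s.card = m) ∧ F.card = k}

/-- `D(n)`: the maximal cardinality of an admissible collection of subsets of an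
`n`-element set (no cardinality restriction on members). -/
noncomputable def boundD (n : ℕ) : ℕ :=
  sSup {k | ∃ F : Finset (Finset (Fin n)), admissibleColl F ∧ F.card = k}

section Aux
open Finset

lemma admissible_empty {n : ℕ} : admissibleColl (∅ : Finset (Finset (Fin n))) := by
  refine ⟨by simp, ?_⟩
  rintro x ⟨α, -, rfl⟩ _
  simp

lemma subcoll_admissible {n : ℕ} {F G : Finset (Finset (Fin n))} (hG : G ⊆ F)
    (hF : admissibleColl F) : admissibleColl G := by
  classical
  refine ⟨fun r hr s hs => hF.1 r (hG hr) s (hG hs), ?_⟩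
  rintro x ⟨α, hα, rfl⟩ hD
  apply hF.2 _ _ hD
  refine ⟨fun s => if s ∈ G then α s else 0, ?_, ?_⟩
  · rw [Finset.sum_ite_mem, Finset.inter_eq_right.mpr hG, hα]
  · simp only [ite_smul, zero_smul]
    rw [Finset.sum_ite_mem, Finset.inter_eq_right.mpr hG]

lemma bddD (n : ℕ) :
    BddAbove {k | ∃ F : Finset (Finset (Fin n)), admissibleColl F ∧ F.card = k} :=
  ⟨Fintype.card (Finset (Fin n)), fun k ⟨F, _, hk⟩ => hk ▸ F.card_le_univ⟩

lemma bddA (m n : ℕ) :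
    BddAbove {k | ∃ F : Finset (Finset (Fin n)),
      admissibleColl F ∧ (∀ s ∈ F, s.card = m) ∧ F.card = k} :=
  ⟨Fintype.card (Finset (Fin n)), fun k ⟨F, _, _, hk⟩ => hk ▸ F.card_le_univ⟩

lemma le_boundD {n : ℕ} {F : Finset (Finset (Fin n))} (hF : admissibleColl F) :
    F.card ≤ boundD n := le_csSup (bddD n) ⟨F, hF, rfl⟩

lemma le_boundA {m n : ℕ} {F : Finset (Finset (Fin n))} (hF : admissibleColl F)
    (hm : ∀ s ∈ F, s.card = m) : F.card ≤ boundA m n := le_csSup (bddA m n) ⟨F, hF, hm, rfl⟩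

lemma boundD_le {n B : ℕ} (h : ∀ F : Finset (Finset (Fin n)), admissibleColl F → F.card ≤ B) :
    boundD n ≤ B :=
  csSup_le ⟨0, ∅, admissible_empty, Finset.card_empty⟩ (fun _ ⟨F, hF, hk⟩ => hk ▸ h F hF)

lemma sum_int {ι : Type*} {t : Finset ι} {f : ι → ℚ} (h : ∀ i ∈ t, ∃ k : ℤ, f i = k) :
    ∃ k : ℤ, ∑ i ∈ t, f i = k := by
  classical
  induction t using Finset.induction with
  | empty => exact ⟨0, by simp⟩
  | @insert a t hi ih =>
      obtain ⟨k, hk⟩ := h _ (mem_insert_self a t)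
      obtain ⟨K, hK⟩ := ih (fun i hi => h i (mem_insert_of_mem hi))
      exact ⟨k + K, by rw [sum_insert hi, hk, hK]; push_cast; ring⟩

-- deletion of last coordinate
def del {n : ℕ} (s : Finset (Fin (n+1))) : Finset (Fin n) :=
  univ.filter fun i => i.castSucc ∈ s

lemma mem_del {n : ℕ} {s : Finset (Fin (n+1))} {i : Fin n} :
    i ∈ del s ↔ i.castSucc ∈ s := by simp [del]

lemma del_symmDiff {n : ℕ} (r s : Finset (Fin (n+1))) :
    del (symmDiff r s) = symmDiff (del r) (del s) := by
  ext i; simp [mem_del, Finset.mem_symmDiff]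

lemma map_del {n : ℕ} {s : Finset (Fin (n+1))} (h : Fin.last n ∉ s) :
    (del s).map Fin.castSuccEmb = s := by
  ext j
  simp only [Finset.mem_map, mem_del, Fin.castSuccEmb, Function.Embedding.coeFn_mk]
  constructor
  · rintro ⟨i, hi, rfl⟩; exact hi
  · intro hj
    obtain ⟨i, rfl⟩ := Fin.exists_castSucc_eq.mpr (fun e => h (e ▸ hj))
    exact ⟨i, hj, rfl⟩

lemma card_del {n : ℕ} {s : Finset (Fin (n+1))} (h : Fin.last n ∉ s) :
    (del s).card = s.card := by
  conv_rhs => rw [← map_del h]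
  rw [Finset.card_map]

lemma del_inj {n : ℕ} {r s : Finset (Fin (n+1))}
    (hr : Fin.last n ∈ r ↔ Fin.last n ∈ s) (h : del r = del s) : r = s := by
  ext j
  induction j using Fin.lastCases with
  | last => exact hr
  | cast i =>
      constructor
      · intro hi; exact mem_del.mp (h ▸ mem_del.mpr hi)
      · intro hi; exact mem_del.mp (h.symm ▸ mem_del.mpr hi)

lemma charVec_del {n : ℕ} (s : Finset (Fin (n+1))) (j : Fin n) :
    charVecQ (del s) j = charVecQ s j.castSucc := by
  simp [charVecQ, mem_del]

lemma del_transfer {n : ℕ} {F F' : Finset (Finset (Fin (n+1)))}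
    (hF : admissibleColl F) (hsub : F' ⊆ F)
    (hc : ∀ r ∈ F', ∀ s ∈ F', (Fin.last n ∈ r ↔ Fin.last n ∈ s)) :
    admissibleColl (F'.image del) ∧ (F'.image del).card = F'.card := by
  classical
  have hinj : Set.InjOn del ↑F' := fun r hr s hs h => del_inj (hc r hr s hs) h
  have hinj' : ∀ r ∈ F', ∀ s ∈ F', del r = del s → r = s := fun r hr s hs => hinj hr hs
  refine ⟨⟨?_, ?_⟩, Finset.card_image_of_injOn hinj⟩
  · rintro r' hr' s' hs'
    obtain ⟨r, hr, rfl⟩ := Finset.mem_image.mp hr'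
    obtain ⟨s, hs, rfl⟩ := Finset.mem_image.mp hs'
    have hlast : Fin.last n ∉ symmDiff r s := by
      intro h
      rcases Finset.mem_symmDiff.mp h with ⟨h1, h2⟩ | ⟨h1, h2⟩
      · exact h2 ((hc r hr s hs).mp h1)
      · exact h2 ((hc r hr s hs).mpr h1)
    rw [← del_symmDiff, card_del hlast]
    exact hF.1 r (hsub hr) s (hsub hs)
  · rintro x ⟨α, hα0, rfl⟩ hD h2
    set y : Fin (n+1) → ℚ := ∑ s ∈ F', α (del s) • charVecQ s with hy
    have hsum : ∀ g : Finset (Fin n) → ℚ, ∑ t ∈ F'.image del, g t = ∑ s ∈ F', g (del s) :=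
      fun g => Finset.sum_image hinj'
    have hx : ∀ j : Fin n, (∑ t ∈ F'.image del, α t • charVecQ t) j = y (Fin.castSucc j) := by
      intro j
      rw [show (∑ t ∈ F'.image del, α t • charVecQ t) j
            = ∑ t ∈ F'.image del, α t * charVecQ t j by
          simp [Finset.sum_apply]]
      rw [hsum (fun t => α t * charVecQ t j)]
      simp only [hy, Finset.sum_apply, Pi.smul_apply, smul_eq_mul, charVec_del]
    have hylast : y (Fin.last n) = 0 := by
      by_cases hall : ∀ s ∈ F', Fin.last n ∈ s
      · have h1 : y (Fin.last n) = ∑ s ∈ F', α (del s) := by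
          simp only [hy, Finset.sum_apply, Pi.smul_apply, smul_eq_mul, charVecQ]
          exact Finset.sum_congr rfl fun s hs => by rw [if_pos (hall s hs), mul_one]
        rw [h1, ← hsum (fun t => α t), hα0]
      · push_neg at hall
        obtain ⟨s0, hs0, hs0'⟩ := hall
        simp only [hy, Finset.sum_apply, Pi.smul_apply, smul_eq_mul]
        apply Finset.sum_eq_zero
        intro s hs
        have hns : Fin.last n ∉ s := fun h => hs0' ((hc s hs s0 hs0).mp h)
        simp [charVecQ, hns]
    have hyspan : y ∈ spanZero F := by
      refine ⟨fun s => if s ∈ F' then α (del s) else 0, ?_, ?_⟩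
      · rw [Finset.sum_ite_mem, Finset.inter_eq_right.mpr hsub,
          ← hsum (fun t => α t), hα0]
      · simp only [ite_smul, zero_smul]
        rw [Finset.sum_ite_mem, Finset.inter_eq_right.mpr hsub, hy]
    have hyD : inDn y := by
      constructor
      · intro i
        induction i using Fin.lastCases with
        | last => exact ⟨0, by rw [hylast]; simp⟩
        | cast j => rw [← hx j]; exact hD.1 j
      · obtain ⟨k, hk⟩ := hD.2
        refine ⟨k, ?_⟩
        rw [Fin.sum_univ_castSucc, hylast, add_zero, ← hk]
        exact Finset.sum_congr rfl fun j _ => (hx j).symm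
    apply hF.2 y hyspan hyD
    rw [Fin.sum_univ_castSucc, hylast, mul_zero, add_zero, ← h2]
    exact Finset.sum_congr rfl fun j _ => by rw [hx j]

lemma boundD_succ (n : ℕ) : boundD (n+1) ≤ 2 * boundD n := by
  classical
  apply boundD_le
  intro F hF
  set F0 := F.filter (fun s => ¬ Fin.last n ∈ s) with hF0
  set F1 := F.filter (fun s => Fin.last n ∈ s) with hF1
  have hc0 : ∀ r ∈ F0, ∀ s ∈ F0, (Fin.last n ∈ r ↔ Fin.last n ∈ s) := by
    intro r hr s hs
    rw [hF0, Finset.mem_filter] at hr hs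
    simp [hr.2, hs.2]
  have hc1 : ∀ r ∈ F1, ∀ s ∈ F1, (Fin.last n ∈ r ↔ Fin.last n ∈ s) := by
    intro r hr s hs
    rw [hF1, Finset.mem_filter] at hr hs
    simp [hr.2, hs.2]
  obtain ⟨ha0, hcard0⟩ := del_transfer hF (Finset.filter_subset _ F) hc0
  obtain ⟨ha1, hcard1⟩ := del_transfer hF (Finset.filter_subset _ F) hc1
  have h0 : F0.card ≤ boundD n := hcard0 ▸ le_boundD ha0
  have h1 : F1.card ≤ boundD n := hcard1 ▸ le_boundD ha1
  have hsplit : F1.card + F0.card = F.card :=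
    Finset.card_filter_add_card_filter_not (fun s => Fin.last n ∈ s)
  omega

lemma charVec_symmDiff {n : ℕ} (s o : Finset (Fin n)) (i : Fin n) :
    charVecQ (symmDiff s o) i = if i ∈ o then 1 - charVecQ s i else charVecQ s i := by
  by_cases hs : i ∈ s <;> by_cases ho : i ∈ o <;>
    simp [charVecQ, Finset.mem_symmDiff, hs, ho]

lemma trans_admissible {n : ℕ} {F : Finset (Finset (Fin n))} (hF : admissibleColl F)
    (o : Finset (Fin n)) :
    admissibleColl (F.image (fun s => symmDiff s o)) ∧
      (F.image (fun s => symmDiff s o)).card = F.card := by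
  classical
  have hinj : Function.Injective (fun s : Finset (Fin n) => symmDiff s o) := by
    intro r s h
    have := congrArg (fun t => symmDiff t o) h
    simpa [symmDiff_symmDiff_cancel_right] using this
  have hinj' : ∀ r ∈ F, ∀ s ∈ F, symmDiff r o = symmDiff s o → r = s :=
    fun r _ s _ h => hinj h
  have hsum : ∀ g : Finset (Fin n) → ℚ,
      ∑ t ∈ F.image (fun s => symmDiff s o), g t = ∑ s ∈ F, g (symmDiff s o) :=
    fun g => Finset.sum_image hinj'
  refine ⟨⟨?_, ?_⟩, Finset.card_image_of_injective _ hinj⟩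
  · rintro r' hr' s' hs'
    obtain ⟨r, hr, rfl⟩ := Finset.mem_image.mp hr'
    obtain ⟨s, hs, rfl⟩ := Finset.mem_image.mp hs'
    have hcancel : symmDiff (symmDiff r o) (symmDiff s o) = symmDiff r s := by
      rw [symmDiff_symmDiff_symmDiff_comm, symmDiff_self, symmDiff_bot]
    rw [hcancel]
    exact hF.1 r hr s hs
  · rintro x ⟨α, hα0, rfl⟩ hD h2
    set y : Fin n → ℚ := ∑ s ∈ F, α (symmDiff s o) • charVecQ s with hy
    have hα0' : ∑ s ∈ F, α (symmDiff s o) = 0 := by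
      rw [← hsum (fun t => α t), hα0]
    have hxpt : ∀ i, (∑ t ∈ F.image (fun s => symmDiff s o), α t • charVecQ t) i
        = ∑ s ∈ F, α (symmDiff s o) * charVecQ (symmDiff s o) i := by
      intro i
      rw [show (∑ t ∈ F.image (fun s => symmDiff s o), α t • charVecQ t) i
            = ∑ t ∈ F.image (fun s => symmDiff s o), α t * charVecQ t i by
          simp [Finset.sum_apply]]
      rw [hsum (fun t => α t * charVecQ t i)]
    have hypt : ∀ i, y i = ∑ s ∈ F, α (symmDiff s o) * charVecQ s i := by
      intro i; simp [hy, Finset.sum_apply]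
    have hx : ∀ i, (∑ t ∈ F.image (fun s => symmDiff s o), α t • charVecQ t) i
        = if i ∈ o then -y i else y i := by
      intro i
      rw [hxpt i, hypt i]
      by_cases ho : i ∈ o
      · simp only [ho, if_true]
        have : ∀ s ∈ F, α (symmDiff s o) * charVecQ (symmDiff s o) i
            = α (symmDiff s o) - α (symmDiff s o) * charVecQ s i := by
          intro s _
          rw [charVec_symmDiff, if_pos ho]; ring
        rw [Finset.sum_congr rfl this, Finset.sum_sub_distrib, hα0', zero_sub]
      · simp only [ho, if_false]
        refine Finset.sum_congr rfl fun s _ => ?_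
        rw [charVec_symmDiff, if_neg ho]
    have hyspan : y ∈ spanZero F := ⟨fun s => α (symmDiff s o), hα0', hy⟩
    have hyD : inDn y := by
      constructor
      · intro i
        obtain ⟨k, hk⟩ := hD.1 i
        rw [hx i] at hk
        by_cases ho : i ∈ o
        · exact ⟨-k, by rw [if_pos ho] at hk; push_cast; linarith⟩
        · exact ⟨k, by rw [if_neg ho] at hk; exact hk⟩
      · obtain ⟨k, hk⟩ := hD.2
        obtain ⟨K, hK⟩ := sum_int (t := o) (f := fun i =>
          (∑ t ∈ F.image (fun s => symmDiff s o), α t • charVecQ t) i)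
          (fun i _ => hD.1 i)
        refine ⟨k - K, ?_⟩
        have key : ∀ i, y i = (∑ t ∈ F.image (fun s => symmDiff s o), α t • charVecQ t) i
            + (if i ∈ o then 2 * y i else 0) := by
          intro i
          rw [hx i]
          by_cases ho : i ∈ o <;> simp [ho] <;> ring
        rw [Finset.sum_congr rfl (fun i _ => key i), Finset.sum_add_distrib, hk,
          Finset.sum_ite_mem, Finset.univ_inter]
        have hyo : ∑ i ∈ o, 2 * y i = 2 * (-K) := by
          have : ∀ i ∈ o, 2 * y i
              = 2 * (-(∑ t ∈ F.image (fun s => symmDiff s o), α t • charVecQ t) i) := by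
            intro i hi
            rw [hx i, if_pos hi]; ring
          rw [Finset.sum_congr rfl this, ← Finset.mul_sum, Finset.sum_neg_distrib, hK]
        rw [hyo]; push_cast; ring
    apply hF.2 y hyspan hyD
    rw [← h2]
    refine Finset.sum_congr rfl fun i _ => ?_
    rw [hx i]
    by_cases ho : i ∈ o <;> simp [ho] <;> ring

lemma boundD_le_sumA (n : ℕ) :
    boundD n ≤ ∑ m ∈ ({0, 4, 6, 8, 12} : Finset ℕ), boundA m n := by
  classical
  apply boundD_le
  intro F hF
  rcases Finset.eq_empty_or_nonempty F with rfl | ⟨o, ho⟩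
  · simp
  obtain ⟨hG, hGcard⟩ := trans_admissible hF o
  set G := F.image (fun s => symmDiff s o) with hGdef
  have hemp : (∅ : Finset (Fin n)) ∈ G := by
    rw [hGdef]
    exact Finset.mem_image.mpr ⟨o, ho, by simp [symmDiff_self]⟩
  have hcards : ∀ s ∈ G, s.card ∈ ({0, 4, 6, 8, 12} : Finset ℕ) := by
    intro s hs
    have h := hG.1 s hs ∅ hemp
    have hsd : symmDiff s (∅ : Finset (Fin n)) = s := symmDiff_bot s
    rw [hsd] at h
    simpa using h
  rw [← hGcard, Finset.card_eq_sum_card_fiberwise hcards]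
  apply Finset.sum_le_sum
  intro m _
  exact le_boundA (subcoll_admissible (Finset.filter_subset _ _) hG)
    (fun s hs => (Finset.mem_filter.mp hs).2)

end Aux

/-- `D(n) ≤ 2·D(n−1)` for `n ≥ 1`, and
`D(n) ≤ Σ_{m ∈ {0,4,6,8,12}} A(m,n)`. -/
theorem stmt10 (n : ℕ) (hn : 1 ≤ n) :
    boundD n ≤ 2 * boundD (n - 1) ∧
    boundD n ≤ ∑ m ∈ ({0, 4, 6, 8, 12} : Finset ℕ), boundA m n := by
  obtain ⟨m, rfl⟩ : ∃ m, n = m + 1 := ⟨n - 1, by omega⟩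
  exact ⟨by simpa using boundD_succ m, boundD_le_sumA (m + 1)⟩
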